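/- arXiv:1205.2984 — 3 statements merged into one kernel-verified Lean document; each statement's English description precedes it below -/
import Mathlib

section
/- The discriminant of the number field ℓ₂ = ℚ[x]/(x⁴ − x² − 1) equals −400; in particular its absolute value is 𝒟_{ℓ₂} = 400. -/
/-!
Let `θ` be the root of `X⁴ - X² - 1`, so `θ⁴ = θ² + 1`. The ring of integers of `ℚ(θ)` is `ℤ[θ]`,
so the discriminant is the determinant of the trace form on `1, θ, θ², θ³`, which is `-400`.

If `x = a + bθ + cθ² + dθ³` is an algebraic integer, the integrality of the traces `Tr(x θʲ)`
already gives `10 x ∈ ℤ[θ]`, so it remains to show that `ℤ[θ]` is maximal at `5` and at `2`.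
For `x ∈ ℤ[θ] / 5`, the traces of `x θ` and `x θ²` reduce `x` modulo `ℤ[θ]` to
`(a + 2dθ + 3aθ² + dθ³) / 5`, whose square has trace `(70a² + 40d²) / 25`; as `3` is not a square
modulo `5`, this forces `5 ∣ a, d`. At `2` the trace form is even, so `Tr(x²)` and `Tr(x² θ²)`
modulo `4` only see the parities of the coefficients; they reduce `x` to
`(a + bθ + bθ² + (a + b)θ³) / 2`, and the trace of its cube is integral only if `a` and `b` are
even.
-/

open Polynomial

theorem exists_intCast_eq_trace_of_isIntegral {L : Type*} [Field L] [Algebra ℚ L]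
    [FiniteDimensional ℚ L] {x : L} (hx : IsIntegral ℤ x) :
    ∃ m : ℤ, Algebra.trace ℚ L x = m := by
  obtain ⟨m, hm⟩ :=
    IsIntegrallyClosed.isIntegral_iff.mp (Algebra.isIntegral_trace (R := ℤ) (L := ℚ) hx)
  exact ⟨m, hm.symm⟩

theorem dvd_of_isIntegral_of_trace_eq_div {L : Type*} [Field L] [Algebra ℚ L]
    [FiniteDimensional ℚ L] {x : L} (hx : IsIntegral ℤ x) {n q : ℤ} (hq : q ≠ 0)
    (h : Algebra.trace ℚ L x = n / q) : q ∣ n := by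
  obtain ⟨m, hm⟩ := exists_intCast_eq_trace_of_isIntegral hx
  rw [hm, eq_div_iff (by exact_mod_cast hq)] at h
  exact ⟨m, by exact_mod_cast h.symm.trans (mul_comm _ _)⟩

theorem NumberField.discr_eq_discr_of_isIntegral {K : Type*} [Field K] [NumberField K]
    {ι : Type*} [Fintype ι] [DecidableEq ι] (b : Module.Basis ι ℚ K)
    (hb : ∀ i, IsIntegral ℤ (b i))
    (hrepr : ∀ x, IsIntegral ℤ x → ∀ i, IsIntegral ℤ (b.repr x i)) :
    (discr K : ℚ) = Algebra.discr ℚ b := by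
  rw [coe_discr]
  refine Algebra.discr_eq_discr_of_toMatrix_coeff_isIntegral K (fun i j => ?_) (fun i j => ?_)
  · rw [Module.Basis.toMatrix_apply]
    obtain ⟨y, hy⟩ : ∃ y : RingOfIntegers K, algebraMap _ K y = b j :=
      ⟨⟨b j, hb j⟩, rfl⟩
    rw [← hy, integralBasis_repr_apply]
    exact isIntegral_algebraMap
  · rw [Module.Basis.toMatrix_apply]
    refine hrepr _ ?_ i
    rw [integralBasis_apply]
    exact RingOfIntegers.isIntegral_coe _

namespace Ell2

local notation "f" => (X ^ 4 - X ^ 2 - 1 : ℚ[X])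
local notation "K" => AdjoinRoot f
local notation "θ" => AdjoinRoot.root f

theorem natDegree_eq_four : natDegree f = 4 := by compute_degree!

theorem root_pow_four : θ ^ 4 = θ ^ 2 + 1 := by
  have h := AdjoinRoot.eval₂_root f
  simp only [eval₂_sub, eval₂_pow, eval₂_X, eval₂_one] at h
  linear_combination h

theorem isIntegral_root : IsIntegral ℤ θ := by
  refine ⟨X ^ 4 - X ^ 2 - 1, ?_, ?_⟩
  · have h : (X ^ 4 - X ^ 2 - 1 : ℤ[X]) = X ^ 4 - (X ^ 2 + 1) := by ring
    rw [h]
    exact monic_X_pow_sub (by compute_degree!)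
  · simp only [eval₂_sub, eval₂_pow, eval₂_X, eval₂_one]
    linear_combination root_pow_four

noncomputable def basis : Module.Basis (Fin 4) ℚ K :=
  (AdjoinRoot.powerBasis (ne_zero_of_natDegree_gt (n := 0) (by rw [natDegree_eq_four]; norm_num))
    ).basis.reindex (finCongr natDegree_eq_four)

theorem basis_apply (i : Fin 4) : basis i = θ ^ (i : ℕ) := by
  rw [basis, Module.Basis.reindex_apply, PowerBasis.basis_eq_pow]
  rfl

noncomputable def ofCoeffs (a b c d : ℚ) : K :=
  algebraMap ℚ K a + algebraMap ℚ K b * θ + algebraMap ℚ K c * θ ^ 2 +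
    algebraMap ℚ K d * θ ^ 3

theorem ofCoeffs_mul (a b c d a' b' c' d' : ℚ) :
    ofCoeffs a b c d * ofCoeffs a' b' c' d' =
      ofCoeffs (a * a' + b * d' + c * c' + d * b' + d * d')
        (a * b' + b * a' + c * d' + d * c')
        (a * c' + b * b' + c * a' + b * d' + c * c' + d * b' + 2 * d * d')
        (a * d' + b * c' + c * b' + d * a' + c * d' + d * c') := by
  simp only [ofCoeffs, map_add, map_mul, map_ofNat]
  set A := algebraMap ℚ K
  linear_combination (A b * A d' + A c * A c' + A d * A b' + (A c * A d' + A d * A c') * θ +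
      A d * A d' * (θ ^ 2 + 1)) * root_pow_four

theorem ofCoeffs_root : ofCoeffs 0 1 0 0 = θ := by simp [ofCoeffs]
theorem ofCoeffs_root_sq : ofCoeffs 0 0 1 0 = θ ^ 2 := by simp [ofCoeffs]
theorem ofCoeffs_root_cube : ofCoeffs 0 0 0 1 = θ ^ 3 := by simp [ofCoeffs]

theorem ofCoeffs_add (a b c d a' b' c' d' : ℚ) :
    ofCoeffs a b c d + ofCoeffs a' b' c' d' = ofCoeffs (a + a') (b + b') (c + c') (d + d') := by
  simp only [ofCoeffs, map_add]; ring

theorem ofCoeffs_eq_sum (a b c d : ℚ) :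
    ofCoeffs a b c d = ∑ i, ![a, b, c, d] i • basis i := by
  simp [Fin.sum_univ_four, basis_apply, ofCoeffs, Algebra.smul_def]

theorem repr_ofCoeffs (a b c d : ℚ) : basis.repr (ofCoeffs a b c d) = ![a, b, c, d] := by
  rw [ofCoeffs_eq_sum, ← basis.equivFun_symm_apply, ← basis.equivFun_apply,
    LinearEquiv.apply_symm_apply]

theorem exists_eq_ofCoeffs (x : K) : ∃ a b c d : ℚ, x = ofCoeffs a b c d := by
  refine ⟨basis.repr x 0, basis.repr x 1, basis.repr x 2, basis.repr x 3, ?_⟩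
  rw [ofCoeffs_eq_sum]
  conv_lhs => rw [← basis.sum_repr x]
  simp only [Fin.sum_univ_four]
  rfl

theorem trace_ofCoeffs (a b c d : ℚ) :
    Algebra.trace ℚ K (ofCoeffs a b c d) = 4 * a + 2 * c := by
  have mul_root (a b c d : ℚ) : ofCoeffs a b c d * θ = ofCoeffs d a (b + d) c := by
    rw [← ofCoeffs_root, ofCoeffs_mul]; congr 1 <;> ring
  rw [Algebra.trace_eq_matrix_trace basis, Matrix.trace, Fin.sum_univ_four]
  simp only [Matrix.diag_apply, Algebra.leftMulMatrix_eq_repr_mul, basis_apply]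
  simp only [Fin.isValue, Fin.coe_ofNat_eq_mod, Nat.zero_mod, Nat.one_mod, Nat.reduceMod,
    Nat.mod_succ, pow_zero, pow_succ, mul_one, one_mul, ← mul_assoc, mul_root, repr_ofCoeffs,
    Matrix.cons_val_zero, Matrix.cons_val_one, Matrix.cons_val]
  ring

theorem trace_ofCoeffs_mul_ofCoeffs (a b c d a' b' c' d' : ℚ) :
    Algebra.trace ℚ K (ofCoeffs a b c d * ofCoeffs a' b' c' d') =
      4 * a * a' + 2 * (a * c' + c * a') + 2 * b * b' + 6 * (b * d' + d * b') + 6 * c * c' +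
        8 * d * d' := by
  rw [ofCoeffs_mul, trace_ofCoeffs]; ring

theorem isIntegral_ofCoeffs (a b c d : ℤ) : IsIntegral ℤ (ofCoeffs a b c d) := by
  have hcast (n : ℤ) : algebraMap ℚ K n = algebraMap ℤ K n := by simp
  simp only [ofCoeffs, hcast]
  have hθ := isIntegral_root
  exact ((((isIntegral_algebraMap.add (isIntegral_algebraMap.mul hθ)).add
    (isIntegral_algebraMap.mul (hθ.pow 2)))).add (isIntegral_algebraMap.mul (hθ.pow 3)))

theorem basis_eq_ofCoeffs (i : Fin 4) :
    basis i = ofCoeffs (![1, 0, 0, 0] i) (![0, 1, 0, 0] i) (![0, 0, 1, 0] i) (![0, 0, 0, 1] i) := by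
  fin_cases i <;> simp [basis_apply, ofCoeffs]

theorem traceMatrix_basis :
    Algebra.traceMatrix ℚ basis = !![4, 0, 2, 0; 0, 2, 0, 6; 2, 0, 6, 0; 0, 6, 0, 8] := by
  ext i j
  rw [Algebra.traceMatrix_apply, Algebra.traceForm_apply, basis_eq_ofCoeffs, basis_eq_ofCoeffs,
    trace_ofCoeffs_mul_ofCoeffs]
  fin_cases i <;> fin_cases j <;> norm_num

theorem discr_basis : Algebra.discr ℚ basis = -400 := by
  rw [Algebra.discr_def, traceMatrix_basis]
  simp [Matrix.det_succ_row_zero, Fin.sum_univ_succ, Fin.succAbove]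
  norm_num

section Integrality

variable [Fact (Irreducible f)]

-- Once `K` is a field it also carries `DivisionRing.toRatAlgebra`, which is not reducibly
-- defeq to the `AdjoinRoot` algebra structure in which the trace computations above are stated.
attribute [local instance high] AdjoinRoot.instAlgebra

theorem exists_eq_ofCoeffs_div_ten {x : K} (hx : IsIntegral ℤ x) :
    ∃ a b c d : ℤ, x = ofCoeffs (a / 10) (b / 10) (c / 10) (d / 10) := by
  obtain ⟨q₀, q₁, q₂, q₃, rfl⟩ := exists_eq_ofCoeffs x
  obtain ⟨m₀, h₀⟩ := exists_intCast_eq_trace_of_isIntegral hx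
  obtain ⟨m₁, h₁⟩ := exists_intCast_eq_trace_of_isIntegral (hx.mul isIntegral_root)
  obtain ⟨m₂, h₂⟩ := exists_intCast_eq_trace_of_isIntegral (hx.mul (isIntegral_root.pow 2))
  obtain ⟨m₃, h₃⟩ := exists_intCast_eq_trace_of_isIntegral (hx.mul (isIntegral_root.pow 3))
  rw [trace_ofCoeffs] at h₀
  rw [← ofCoeffs_root, trace_ofCoeffs_mul_ofCoeffs] at h₁
  rw [← ofCoeffs_root_sq, trace_ofCoeffs_mul_ofCoeffs] at h₂
  rw [← ofCoeffs_root_cube, trace_ofCoeffs_mul_ofCoeffs] at h₃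
  refine ⟨3 * m₀ - m₂, 3 * m₃ - 4 * m₁, 2 * m₂ - m₀, 3 * m₁ - m₃, ?_⟩
  congr 1 <;> push_cast <;> linarith

theorem five_dvd_coeffs_of_isIntegral {a b c d : ℤ}
    (hx : IsIntegral ℤ (ofCoeffs (a / 5) (b / 5) (c / 5) (d / 5))) :
    5 ∣ a ∧ 5 ∣ b ∧ 5 ∣ c ∧ 5 ∣ d := by
  have h₁ : (5 : ℤ) ∣ 2 * b + 6 * d :=
    dvd_of_isIntegral_of_trace_eq_div (hx.mul isIntegral_root) (by norm_num)
      (by rw [← ofCoeffs_root, trace_ofCoeffs_mul_ofCoeffs]; push_cast; ring)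
  have h₂ : (5 : ℤ) ∣ 2 * a + 6 * c :=
    dvd_of_isIntegral_of_trace_eq_div (hx.mul (isIntegral_root.pow 2)) (by norm_num)
      (by rw [← ofCoeffs_root_sq, trace_ofCoeffs_mul_ofCoeffs]; push_cast; ring)
  obtain ⟨s, hs⟩ : ∃ s, b = 2 * d + 5 * s := ⟨(b - 2 * d) / 5, by omega⟩
  obtain ⟨t, ht⟩ : ∃ t, c = 3 * a + 5 * t := ⟨(c - 3 * a) / 5, by omega⟩
  have hsplit : ofCoeffs (a / 5) (b / 5) (c / 5) (d / 5) =
      ofCoeffs (a / 5) (2 * d / 5) (3 * a / 5) (d / 5) + ofCoeffs 0 s t 0 := by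
    rw [ofCoeffs_add, hs, ht]; congr 1 <;> push_cast <;> ring
  have hz : IsIntegral ℤ (ofCoeffs (a / 5) (2 * d / 5) (3 * a / 5) (d / 5)) := by
    simpa [hsplit] using hx.sub (isIntegral_ofCoeffs 0 s t 0)
  have h₃ : (25 : ℤ) ∣ 70 * a ^ 2 + 40 * d ^ 2 :=
    dvd_of_isIntegral_of_trace_eq_div (hz.mul hz) (by norm_num)
      (by rw [trace_ofCoeffs_mul_ofCoeffs]; push_cast; ring)
  have h₄ : ((14 * a ^ 2 + 8 * d ^ 2 : ℤ) : ZMod 5) = 0 :=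
    (ZMod.intCast_zmod_eq_zero_iff_dvd _ 5).2 (by omega)
  push_cast at h₄
  obtain ⟨ha, hd⟩ :=
    (by decide : ∀ u v : ZMod 5, 14 * u ^ 2 + 8 * v ^ 2 = 0 → u = 0 ∧ v = 0) _ _ h₄
  rw [ZMod.intCast_zmod_eq_zero_iff_dvd] at ha hd
  omega

theorem two_dvd_add_coeffs_of_isIntegral {a b c d : ℤ}
    (hx : IsIntegral ℤ (ofCoeffs (a / 2) (b / 2) (c / 2) (d / 2))) :
    2 ∣ b + c ∧ 2 ∣ a + b + d := by
  have h₀ : (4 : ℤ) ∣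
      4 * a ^ 2 + 2 * b ^ 2 + 6 * c ^ 2 + 8 * d ^ 2 + 4 * (a * c) + 12 * (b * d) :=
    dvd_of_isIntegral_of_trace_eq_div (hx.mul hx) (by norm_num)
      (by rw [trace_ofCoeffs_mul_ofCoeffs]; push_cast; ring)
  have h₂ : (4 : ℤ) ∣
      2 * a ^ 2 + 6 * b ^ 2 + 8 * c ^ 2 + 14 * d ^ 2 + 12 * (a * c) + 16 * (b * d) :=
    dvd_of_isIntegral_of_trace_eq_div ((hx.mul hx).mul (isIntegral_root.pow 2)) (by norm_num)
      (by rw [ofCoeffs_mul, ← ofCoeffs_root_sq, trace_ofCoeffs_mul_ofCoeffs]; push_cast; ring)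
  have h₀' : ((2 * a ^ 2 + b ^ 2 + 3 * c ^ 2 + 4 * d ^ 2 + 2 * (a * c) + 6 * (b * d) : ℤ) :
      ZMod 2) = 0 :=
    (ZMod.intCast_zmod_eq_zero_iff_dvd _ 2).2 (by omega)
  have h₂' : ((a ^ 2 + 3 * b ^ 2 + 4 * c ^ 2 + 7 * d ^ 2 + 6 * (a * c) + 8 * (b * d) : ℤ) :
      ZMod 2) = 0 :=
    (ZMod.intCast_zmod_eq_zero_iff_dvd _ 2).2 (by omega)
  push_cast at h₀' h₂'
  obtain ⟨hbc, habd⟩ := (by decide : ∀ u v w z : ZMod 2,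
    2 * u ^ 2 + v ^ 2 + 3 * w ^ 2 + 4 * z ^ 2 + 2 * (u * w) + 6 * (v * z) = 0 →
    u ^ 2 + 3 * v ^ 2 + 4 * w ^ 2 + 7 * z ^ 2 + 6 * (u * w) + 8 * (v * z) = 0 →
    v + w = 0 ∧ u + v + z = 0) _ _ _ _ h₀' h₂'
  exact ⟨(ZMod.intCast_zmod_eq_zero_iff_dvd _ 2).1 (by push_cast; exact hbc),
    (ZMod.intCast_zmod_eq_zero_iff_dvd _ 2).1 (by push_cast; exact habd)⟩

theorem two_dvd_coeffs_of_isIntegral {a b c d : ℤ}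
    (hx : IsIntegral ℤ (ofCoeffs (a / 2) (b / 2) (c / 2) (d / 2))) :
    2 ∣ a ∧ 2 ∣ b ∧ 2 ∣ c ∧ 2 ∣ d := by
  obtain ⟨hbc, habd⟩ := two_dvd_add_coeffs_of_isIntegral hx
  obtain ⟨s, hs⟩ : ∃ s, c = b + 2 * s := ⟨(c - b) / 2, by omega⟩
  obtain ⟨t, ht⟩ : ∃ t, d = a + b + 2 * t := ⟨(d - a - b) / 2, by omega⟩
  have hsplit : ofCoeffs (a / 2) (b / 2) (c / 2) (d / 2) =
      ofCoeffs (a / 2) (b / 2) (b / 2) ((a + b) / 2) + ofCoeffs 0 0 s t := by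
    rw [ofCoeffs_add, hs, ht]; congr 1 <;> push_cast <;> ring
  have hz : IsIntegral ℤ (ofCoeffs (a / 2) (b / 2) (b / 2) ((a + b) / 2)) := by
    simpa [hsplit] using hx.sub (isIntegral_ofCoeffs 0 0 s t)
  have h₃ : (8 : ℤ) ∣ 28 * a ^ 3 + 132 * (a ^ 2 * b) + 216 * (a * b ^ 2) + 116 * b ^ 3 :=
    dvd_of_isIntegral_of_trace_eq_div ((hz.mul hz).mul hz) (by norm_num)
      (by rw [ofCoeffs_mul, trace_ofCoeffs_mul_ofCoeffs]; push_cast; ring)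
  have h₃' : ((7 * a ^ 3 + 33 * (a ^ 2 * b) + 54 * (a * b ^ 2) + 29 * b ^ 3 : ℤ) : ZMod 2) = 0 :=
    (ZMod.intCast_zmod_eq_zero_iff_dvd _ 2).2 (by omega)
  push_cast at h₃'
  obtain ⟨ha, hb⟩ := (by decide : ∀ u v : ZMod 2,
    7 * u ^ 3 + 33 * (u ^ 2 * v) + 54 * (u * v ^ 2) + 29 * v ^ 3 = 0 → u = 0 ∧ v = 0) _ _ h₃'
  rw [ZMod.intCast_zmod_eq_zero_iff_dvd] at ha hb
  omega

theorem exists_eq_ofCoeffs_intCast_of_isIntegral {x : K} (hx : IsIntegral ℤ x) :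
    ∃ a b c d : ℤ, x = ofCoeffs a b c d := by
  obtain ⟨a, b, c, d, rfl⟩ := exists_eq_ofCoeffs_div_ten hx
  have h₅ : ofCoeffs (a / 10) (b / 10) (c / 10) (d / 10) +
      ofCoeffs (a / 10) (b / 10) (c / 10) (d / 10) = ofCoeffs (a / 5) (b / 5) (c / 5) (d / 5) := by
    rw [ofCoeffs_add]; congr 1 <;> ring
  obtain ⟨⟨a, rfl⟩, ⟨b, rfl⟩, ⟨c, rfl⟩, ⟨d, rfl⟩⟩ :=
    five_dvd_coeffs_of_isIntegral (h₅ ▸ hx.add hx)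
  have h₂ : ofCoeffs (↑(5 * a) / 10) (↑(5 * b) / 10) (↑(5 * c) / 10) (↑(5 * d) / 10) =
      ofCoeffs (a / 2) (b / 2) (c / 2) (d / 2) := by
    congr 1 <;> push_cast <;> ring
  rw [h₂] at hx ⊢
  obtain ⟨⟨a, rfl⟩, ⟨b, rfl⟩, ⟨c, rfl⟩, ⟨d, rfl⟩⟩ := two_dvd_coeffs_of_isIntegral hx
  exact ⟨a, b, c, d, by congr 1 <;> push_cast <;> ring⟩

theorem discr_eq [NumberField K] : NumberField.discr K = -400 := by
  have hb (i : Fin 4) : IsIntegral ℤ (basis i) := by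
    rw [basis_apply]; exact isIntegral_root.pow _
  have hrepr (x : K) (hx : IsIntegral ℤ x) (i : Fin 4) : IsIntegral ℤ (basis.repr x i) := by
    obtain ⟨a, b, c, d, rfl⟩ := exists_eq_ofCoeffs_intCast_of_isIntegral hx
    rw [repr_ofCoeffs]
    fin_cases i <;> exact isIntegral_intCast _
  have h : (NumberField.discr K : ℚ) = -400 :=
    (NumberField.discr_eq_discr_of_isIntegral basis hb hrepr).trans discr_basis
  exact_mod_cast h

end Integrality

end Ell2

/-- The discriminant of the quartic number field `ℓ₂ = ℚ[x]/(x⁴ - x² - 1)` equals `-400`;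
in particular its absolute value is `400`. -/
theorem stmt_2 [Fact (Irreducible (X ^ 4 - X ^ 2 - 1 : ℚ[X]))]
    [NumberField (AdjoinRoot (X ^ 4 - X ^ 2 - 1 : ℚ[X]))] :
    NumberField.discr (AdjoinRoot (X ^ 4 - X ^ 2 - 1 : ℚ[X])) = -400 ∧
    (NumberField.discr (AdjoinRoot (X ^ 4 - X ^ 2 - 1 : ℚ[X]))).natAbs = 400 := by
  refine ⟨Ell2.discr_eq, ?_⟩
  rw [Ell2.discr_eq]
  rfl
end

section
/- In the number field ℓ₂ = ℚ[x]/(x⁴ − x² − 1), with α the image of x, the element s = (1 + α² + α)·(1 + α² − α)⁻¹ is a unit of the ring of integers of ℓ₂ (both s and s⁻¹ are algebraic integers), and s is totally positive: for every ring homomorphism φ : ℓ₂ → ℝ one has φ(s) > 0. -/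
/-!
Since `α⁴ = α² + 1`, one has `(α + α²)(1 + α² - α) = α + α⁴ = 1 + α² + α`, so `s = α + α²`,
and `(α + α²)(α² - α) = α⁴ - α² = 1`, so `s⁻¹ = α² - α`. Both are polynomials in the algebraic
integer `α`. Under a real embedding `α ↦ x` with `x⁴ = x² + 1`, we get `x² > 1`, hence `|x| > 1`
and `x + x² = x(1 + x) > 0`.
-/

open Polynomial

/-- The quartic number field `ℓ₂ = ℚ[x]/(x⁴ - x² - 1)`. -/
abbrev ell2 : Type := AdjoinRoot (X ^ 4 - X ^ 2 - 1 : ℚ[X])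

/-- `α`, the image of `x` in `ℓ₂ = ℚ[x]/(x⁴ - x² - 1)`; it is a square root of
`ω = (1+√5)/2`. -/
noncomputable def alpha : ell2 := AdjoinRoot.root (X ^ 4 - X ^ 2 - 1 : ℚ[X])

section

variable {R : Type*} [CommRing R] {a : R}

lemma add_sq_mul_one_add_sq_sub_self (ha : a ^ 4 = a ^ 2 + 1) :
    (a + a ^ 2) * (1 + a ^ 2 - a) = 1 + a ^ 2 + a := by
  linear_combination ha

lemma add_sq_mul_sq_sub_self (ha : a ^ 4 = a ^ 2 + 1) : (a + a ^ 2) * (a ^ 2 - a) = 1 := by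
  linear_combination ha

lemma isIntegral_of_pow_four_eq (S : Type*) [CommRing S] [Algebra S R]
    (ha : a ^ 4 = a ^ 2 + 1) : IsIntegral S a := by
  refine ⟨X ^ 4 - X ^ 2 - 1, by monicity!, ?_⟩
  simp only [eval₂_sub, eval₂_pow, eval₂_X, eval₂_one]
  linear_combination ha

end

section

variable {K : Type*} [Field K] [NeZero (2 : K)] {a : K}

lemma one_add_sq_sub_self_ne_zero (ha : a ^ 4 = a ^ 2 + 1) : 1 + a ^ 2 - a ≠ 0 := by
  intro h
  have ha0 : a = 0 := by
    have h2a : (2 : K) * a = 0 := by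
      linear_combination (a + a ^ 2 - 1) * h - add_sq_mul_one_add_sq_sub_self ha
    exact (mul_eq_zero.mp h2a).resolve_left two_ne_zero
  simp [ha0] at ha

lemma mul_inv_one_add_sq_sub_self (ha : a ^ 4 = a ^ 2 + 1) :
    (1 + a ^ 2 + a) * (1 + a ^ 2 - a)⁻¹ = a + a ^ 2 := by
  rw [← add_sq_mul_one_add_sq_sub_self ha,
    mul_inv_cancel_right₀ (one_add_sq_sub_self_ne_zero ha)]

end

lemma add_sq_pos_of_pow_four_eq {R : Type*} [CommRing R] [LinearOrder R]
    [IsStrictOrderedRing R] {x : R} (hx : x ^ 4 = x ^ 2 + 1) : 0 < x + x ^ 2 := by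
  have hx2 : 1 < x ^ 2 := by
    by_contra! h
    nlinarith [mul_nonneg (sq_nonneg x) (sub_nonneg.mpr h)]
  rcases le_or_gt 0 x with h | h
  · linarith
  · nlinarith

lemma alpha_pow_four : alpha ^ 4 = alpha ^ 2 + 1 := by
  have h := AdjoinRoot.eval₂_root (X ^ 4 - X ^ 2 - 1 : ℚ[X])
  simp only [eval₂_sub, eval₂_pow, eval₂_X, eval₂_one] at h
  rw [alpha]
  linear_combination h

/-- In `ℓ₂`, the element `s = π_w ⋅ (conjugate of π_w)⁻¹ = (1 + α² + α)(1 + α² - α)⁻¹`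
is a unit of the ring of integers of `ℓ₂` (both `s` and `s⁻¹` are algebraic integers),
and `s` is totally positive: every real embedding of `ℓ₂` sends `s` to a positive real. -/
theorem stmt_5 [Fact (Irreducible (X ^ 4 - X ^ 2 - 1 : ℚ[X]))] :
    IsIntegral ℤ ((1 + alpha ^ 2 + alpha) * (1 + alpha ^ 2 - alpha)⁻¹) ∧
    IsIntegral ℤ (((1 + alpha ^ 2 + alpha) * (1 + alpha ^ 2 - alpha)⁻¹)⁻¹) ∧
    ∀ φ : ell2 →+* ℝ, 0 < φ ((1 + alpha ^ 2 + alpha) * (1 + alpha ^ 2 - alpha)⁻¹) := by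
  have hα := alpha_pow_four
  have hint := isIntegral_of_pow_four_eq ℤ hα
  rw [mul_inv_one_add_sq_sub_self hα,
    inv_eq_of_mul_eq_one_right (add_sq_mul_sq_sub_self hα)]
  refine ⟨hint.add (hint.pow 2), (hint.pow 2).sub hint, fun φ => ?_⟩
  simpa using add_sq_pos_of_pow_four_eq (by simpa using congrArg φ hα)
end

section
/- The quadratic form f₂(x) = −ω x₀² + x₁² + x₂² + x₃² + x₄² + x₅², where ω = (1+√5)/2, is anisotropic over ℚ(√5): if x₀, …, x₅ ∈ ℚ(√5) satisfy −ω x₀² + x₁² + ⋯ + x₅² = 0, then x₀ = x₁ = ⋯ = x₅ = 0. -/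
/-!
Let `σ` be the embedding of `ℚ(√5)` into `ℝ` sending `√5 ↦ -√5`. It sends `ω` to its conjugate
`ψ = (1 - √5)/2 < 0`, so applying `σ` to `f₂(x) = 0` gives `-ψ σ(x₀)² + σ(x₁)² + ⋯ + σ(x₅)² = 0`,
a sum of squares with positive weights. Hence every `σ(xᵢ)` vanishes, and so does every `xᵢ`.
-/

noncomputable def K : IntermediateField ℚ ℝ := IntermediateField.adjoin ℚ {Real.sqrt 5}

open Polynomial IntermediateField Real

theorem eq_zero_of_sum_mul_sq_eq_zero {F R ι : Type*} [Field F] [Field R] [LinearOrder R]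
    [IsStrictOrderedRing R] [Fintype ι] (σ : F →+* R) {w x : ι → F} (hw : ∀ i, 0 < σ (w i))
    (h : ∑ i, w i * x i ^ 2 = 0) (i : ι) : x i = 0 := by
  have hσ : ∑ i, σ (w i) * σ (x i) ^ 2 = 0 := by simpa using congrArg σ h
  have hterm := (Finset.sum_eq_zero_iff_of_nonneg fun j _ ↦
    mul_nonneg (hw j).le (sq_nonneg (σ (x j)))).mp hσ i (Finset.mem_univ i)
  simpa [(hw i).ne'] using hterm

theorem Rat.sq_ne_five (q : ℚ) : q ^ 2 ≠ 5 := by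
  intro h
  have h' : (q : ℝ) ^ 2 = 5 := by exact_mod_cast h
  refine Nat.prime_five.irrational_sqrt ⟨|q|, ?_⟩
  push_cast
  rw [← Real.sqrt_sq_eq_abs, h']

theorem minpoly_sqrt_five : minpoly ℚ (√5) = X ^ 2 - C 5 :=
  (minpoly.eq_of_irreducible_of_monic
    (X_pow_sub_C_irreducible_of_prime Nat.prime_two Rat.sq_ne_five) (by simp)
    (monic_X_pow_sub_C _ two_ne_zero)).symm

theorem isIntegral_sqrt_five : IsIntegral ℚ (√5) := by
  rw [← minpoly.ne_zero_iff, minpoly_sqrt_five]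
  exact (monic_X_pow_sub_C _ two_ne_zero).ne_zero

noncomputable def sqrtFive : K := AdjoinSimple.gen ℚ (√5)

@[simp]
theorem coe_sqrtFive : (sqrtFive : ℝ) = √5 := rfl

theorem exists_algHom_sqrtFive_eq_neg : ∃ σ : K →ₐ[ℚ] ℝ, σ sqrtFive = -√5 := by
  have hroot : -√5 ∈ (minpoly ℚ (√5)).aroots ℝ := by
    rw [minpoly_sqrt_five, mem_aroots]
    exact ⟨(monic_X_pow_sub_C _ two_ne_zero).ne_zero, by simp⟩
  exact ⟨(algHomAdjoinIntegralEquiv ℚ isIntegral_sqrt_five).symm ⟨_, hroot⟩,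
    algHomAdjoinIntegralEquiv_symm_apply_gen ℚ isIntegral_sqrt_five _⟩

/-- The quadratic form `f₂(x) = -ω x₀² + x₁² + ⋯ + x₅²`, with `ω = (1+√5)/2`, is
anisotropic over `ℚ(√5)`: any solution of `f₂(x) = 0` with all coordinates in `ℚ(√5)`
is trivial. -/
theorem stmt_6 :
    ∀ x : Fin 6 → ℝ, (∀ i, x i ∈ K) →
      -((1 + Real.sqrt 5) / 2) * x 0 ^ 2 + x 1 ^ 2 + x 2 ^ 2 + x 3 ^ 2 + x 4 ^ 2 + x 5 ^ 2 = 0 →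
      ∀ i, x i = 0 := by
  intro x hx h i
  obtain ⟨σ, hσ⟩ := exists_algHom_sqrtFive_eq_neg
  let ω : K := (1 + sqrtFive) / 2
  have hω : (ω : ℝ) = (1 + √5) / 2 := by simp [ω, ← map_ofNat K.val 2]
  have hσω : σ ω = goldenConj := by simp [ω, hσ, goldenConj, sub_eq_add_neg, map_ofNat]
  let w : Fin 6 → K := ![-ω, 1, 1, 1, 1, 1]
  let y : Fin 6 → K := fun i ↦ ⟨x i, hx i⟩
  have hK : ∑ i, w i * y i ^ 2 = 0 := by
    apply Subtype.val_injective
    simpa [Fin.sum_univ_six, w, y, hω, add_assoc] using h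
  have hw : ∀ i, 0 < σ (w i) := by
    intro i
    fin_cases i <;> simp [w, hσω, goldenConj_neg]
  exact congrArg Subtype.val (eq_zero_of_sum_mul_sq_eq_zero σ.toRingHom hw hK i)
end
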